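/- Let P satisfy: P ⊆ ↓S for finite S, and every nonempty intersection of two subsets each possessing maximal elements has a maximal element. With S₀ = max P, S_{n+1} = S_n ∪ max{p : ↑p ∩ S_n not connected}, and S_∞ = ∪_n S_n, the full embedding F : S_∞ ↪ P is a final functor; that is, for every p ∈ P the subposet ↑p ∩ S_∞ is nonempty and connected. -/

import Mathlib

open CategoryTheory

/-- A subset `T` of a poset is connected (as a full subposet) if it is nonempty and any two
of its elements are joined by a finite zigzag of comparabilities within `T`. -/
def ZigzagConnected {P : Type*} [Preorder P] (T : Set P) : Prop :=
  T.Nonempty ∧ ∀ a b : T, Relation.ReflTransGen (fun x y : T => x.1 ≤ y.1 ∨ y.1 ≤ x.1) a b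

/-- The set of maximal elements of a subset `T` of a poset. -/
def maxSet {α : Type*} [PartialOrder α] (T : Set α) : Set α :=
  {a | a ∈ T ∧ ∀ b ∈ T, a ≤ b → b = a}

/-- The recursively defined subsets: `S₀ = max P` and
`S_{n+1} = S_n ∪ max {p : ↑p ∩ S_n is not connected}`. -/
def Sseq (P : Type*) [PartialOrder P] : ℕ → Set P
  | 0 => maxSet Set.univ
  | n + 1 => Sseq P n ∪ maxSet {p | ¬ ZigzagConnected (Set.Ici p ∩ Sseq P n)}

/-- The assumptions on the poset `P`: (1) `P ⊆ ↓S` for some finite `S ⊆ P`; (2) any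
intersection of two subsets, each having maximal elements and with nonempty intersection,
itself has a maximal element. -/
def AsnFin (P : Type*) [PartialOrder P] : Prop :=
  (∃ S : Set P, S.Finite ∧ ∀ p : P, ∃ s ∈ S, p ≤ s) ∧
  (∀ A B : Set P, (A ∩ B).Nonempty → (maxSet A).Nonempty → (maxSet B).Nonempty →
    (maxSet (A ∩ B)).Nonempty)

/-! Let `M` be the finite set of maximal elements of `P`: every element lies below some element
of `M`, and `M ⊆ S_n` for all `n`. By induction on `k`, `↑p ∩ S_k` is connected as soon as `↑p`
meets at most `k + 1` elements of `M`. Otherwise `↑p` meets exactly `k + 2` of them, and the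
intersection axiom gives a maximal `q` among the `x ≥ p` lying below all of `↑p ∩ M`. Any
`b ≥ q` with `↑b ∩ S_k` disconnected meets the same `k + 2` maximal elements, so `b = q`: thus
`q ∈ S_{k+1}`, and every element of `↑p ∩ S_{k+1}` is joined to `q` through a common upper bound
in `M`. Finality of `S_∞ ↪ P` amounts to the connectedness of the comma categories `d / F`, which
are the posets `↑d ∩ S_∞`. -/

section ZigzagConnected

variable {P : Type*} [Preorder P]

theorem zigzagConnected_singleton (a : P) : ZigzagConnected ({a} : Set P) :=
  ⟨Set.singleton_nonempty a, fun x y => by rw [Subsingleton.elim x y]⟩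

theorem ZigzagConnected.of_subset {T T' : Set P} (hT : ZigzagConnected T) (hTT' : T ⊆ T')
    (hcomp : ∀ a ∈ T', ∃ m ∈ T, a ≤ m ∨ m ≤ a) : ZigzagConnected T' := by
  obtain ⟨hne, hzz⟩ := hT
  refine ⟨hne.mono hTT', fun a b => ?_⟩
  let ι : T → T' := Set.inclusion hTT'
  have toT : ∀ a : T', ∃ m : T, Relation.ReflTransGen
      (fun x y : T' => x.1 ≤ y.1 ∨ y.1 ≤ x.1) a (ι m) := fun a => by
    obtain ⟨m, hm, ham⟩ := hcomp a.1 a.2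
    exact ⟨⟨m, hm⟩, .single ham⟩
  obtain ⟨ma, hma⟩ := toT a
  obtain ⟨mb, hmb⟩ := toT b
  have : Std.Symm (fun x y : T' => x.1 ≤ y.1 ∨ y.1 ≤ x.1) := ⟨fun _ _ h => h.symm⟩
  exact (hma.trans (Relation.ReflTransGen.lift ι (fun _ _ h => h) ma mb (hzz ma mb))).trans
    (Std.Symm.symm _ _ hmb)

theorem zigzagConnected_Ici_inter_of_mem {S : Set P} {q : P} (hq : q ∈ S) :
    ZigzagConnected (Set.Ici q ∩ S) :=
  (zigzagConnected_singleton q).of_subset (Set.singleton_subset_iff.2 ⟨le_rfl, hq⟩)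
    fun _ ha => ⟨q, rfl, .inr ha.1⟩

end ZigzagConnected

section maxSet

variable {P : Type*} [PartialOrder P]

theorem mem_maxSet_iff_maximal {T : Set P} {a : P} : a ∈ maxSet T ↔ Maximal (· ∈ T) a := by
  rw [maximal_iff]
  exact and_congr_right fun _ => forall₂_congr fun b _ => imp_congr_right fun _ => eq_comm

theorem self_mem_maxSet_Iic (a : P) : a ∈ maxSet (Set.Iic a) :=
  ⟨le_rfl, fun _ hb hab => le_antisymm hb hab⟩

theorem mem_maxSet_of_mem_maxSet_univ {T : Set P} {a : P} (ha : a ∈ T)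
    (hmax : a ∈ maxSet (Set.univ : Set P)) : a ∈ maxSet T :=
  ⟨ha, fun b _ => hmax.2 b trivial⟩

section FiniteCofinal

variable (hfin : ∃ S : Set P, S.Finite ∧ ∀ p, ∃ s ∈ S, p ≤ s)
include hfin

theorem exists_le_mem_maxSet_univ (p : P) : ∃ m ∈ maxSet (Set.univ : Set P), p ≤ m := by
  obtain ⟨S, hS, hcof⟩ := hfin
  obtain ⟨s, hs, hps⟩ := hcof p
  obtain ⟨m, hsm, hm⟩ := hS.exists_le_maximal hs
  refine ⟨m, mem_maxSet_iff_maximal.2 ⟨trivial, fun b _ hmb => ?_⟩, hps.trans hsm⟩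
  obtain ⟨s', hs', hbs'⟩ := hcof b
  exact (hm.2 hs' (hmb.trans hbs')).trans' hbs'

theorem maxSet_univ_finite : (maxSet (Set.univ : Set P)).Finite := by
  obtain ⟨S, hS, hcof⟩ := hfin
  refine hS.subset fun m hm => ?_
  obtain ⟨s, hs, hms⟩ := hcof m
  rwa [hm.2 s trivial hms] at hs

end FiniteCofinal

theorem maxSet_inter_biInter_Iic_nonempty
    (hinter : ∀ A B : Set P, (A ∩ B).Nonempty → (maxSet A).Nonempty → (maxSet B).Nonempty →
      (maxSet (A ∩ B)).Nonempty)
    {A : Set P} (hA : (maxSet A).Nonempty) {F : Set P} (hF : F.Finite)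
    (hne : (A ∩ ⋂ m ∈ F, Set.Iic m).Nonempty) : (maxSet (A ∩ ⋂ m ∈ F, Set.Iic m)).Nonempty := by
  induction F, hF using Set.Finite.induction_on with
  | empty => simpa using hA
  | @insert a F _ _ ih =>
    have hsplit : A ∩ ⋂ m ∈ insert a F, Set.Iic m = (A ∩ ⋂ m ∈ F, Set.Iic m) ∩ Set.Iic a := by
      rw [Set.biInter_insert]; ac_rfl
    rw [hsplit] at hne ⊢
    exact hinter _ _ hne (ih (hne.mono Set.inter_subset_left)) ⟨a, self_mem_maxSet_Iic a⟩

end maxSet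

theorem final_functor_of_zigzagConnected {P : Type*} [Preorder P] {S : Set P}
    (h : ∀ p, ZigzagConnected (Set.Ici p ∩ S)) : (Subtype.mono_coe (· ∈ S)).functor.Final := by
  refine ⟨fun d => ?_⟩
  obtain ⟨⟨x, hx⟩, hzz⟩ := h d
  let F := (Subtype.mono_coe (· ∈ S)).functor
  let g : ↥(Set.Ici d ∩ S) → StructuredArrow d F := fun a =>
    StructuredArrow.mk (Y := (⟨a.1, a.2.2⟩ : S)) (homOfLE a.2.1)
  have hg : ∀ a b, a.1 ≤ b.1 → Nonempty (g a ⟶ g b) := fun _ _ hab =>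
    ⟨StructuredArrow.homMk (homOfLE hab) (Subsingleton.elim _ _)⟩
  have toG : ∀ j : StructuredArrow d F, Zigzag j (g ⟨j.right.1, leOfHom j.hom, j.right.2⟩) :=
    fun j => Zigzag.of_hom (StructuredArrow.homMk (𝟙 j.right) (Subsingleton.elim _ _))
  have : Nonempty (StructuredArrow d F) := ⟨g ⟨x, hx⟩⟩
  refine zigzag_isConnected fun j₁ j₂ => ?_
  have hlift := Relation.ReflTransGen.lift (p := Zag) g
    (fun a b hab => hab.imp (hg a b) (hg b a)) _ _
    (hzz ⟨j₁.right.1, leOfHom j₁.hom, j₁.right.2⟩ ⟨j₂.right.1, leOfHom j₂.hom, j₂.right.2⟩)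
  exact ((toG j₁).trans hlift).trans (toG j₂).symm

section Sseq

variable {P : Type*} [PartialOrder P]

theorem maxSet_univ_subset_Sseq : ∀ n, maxSet (Set.univ : Set P) ⊆ Sseq P n
  | 0 => subset_rfl
  | n + 1 => (maxSet_univ_subset_Sseq n).trans Set.subset_union_left

section CoveredByMax

variable (hmax : ∀ p : P, ∃ m ∈ maxSet (Set.univ : Set P), p ≤ m) {S : Set P}
  (hS : maxSet Set.univ ⊆ S)
include hmax hS

theorem ZigzagConnected.Ici_inter_mono {S' : Set P} {p : P}
    (h : ZigzagConnected (Set.Ici p ∩ S)) (hSS' : S ⊆ S') : ZigzagConnected (Set.Ici p ∩ S') :=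
  h.of_subset (Set.inter_subset_inter_right _ hSS') fun a ha => by
    obtain ⟨m, hm, ham⟩ := hmax a
    exact ⟨m, ⟨ha.1.trans ham, hS hm⟩, .inl ham⟩

theorem ZigzagConnected.Ici_inter_of_le {p q : P} (h : ZigzagConnected (Set.Ici q ∩ S))
    (hpq : p ≤ q) (hqM : ∀ m ∈ Set.Ici p ∩ maxSet Set.univ, q ≤ m) :
    ZigzagConnected (Set.Ici p ∩ S) :=
  h.of_subset (Set.inter_subset_inter_left _ (Set.Ici_subset_Ici.2 hpq)) fun a ha => by
    obtain ⟨m, hm, ham⟩ := hmax a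
    exact ⟨m, ⟨hqM m ⟨ha.1.trans ham, hm⟩, hS hm⟩, .inl ham⟩

theorem zigzagConnected_Ici_inter_of_mem_of_le {p q : P} (hq : q ∈ S) (hpq : p ≤ q)
    (hqM : ∀ m ∈ Set.Ici p ∩ maxSet Set.univ, q ≤ m) : ZigzagConnected (Set.Ici p ∩ S) :=
  (zigzagConnected_Ici_inter_of_mem hq).Ici_inter_of_le hmax hS hpq hqM

end CoveredByMax

theorem exists_mem_Sseq_succ_le_of_not_zigzagConnected (hP : AsnFin P) {k : ℕ} {p : P}
    (ih : ∀ b : P, (Set.Ici b ∩ maxSet Set.univ).ncard ≤ k + 1 →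
      ZigzagConnected (Set.Ici b ∩ Sseq P k))
    (hcard : (Set.Ici p ∩ maxSet Set.univ).ncard ≤ k + 2)
    (hp : ¬ ZigzagConnected (Set.Ici p ∩ Sseq P k)) :
    ∃ q ∈ Sseq P (k + 1), p ≤ q ∧ ∀ m ∈ Set.Ici p ∩ maxSet Set.univ, q ≤ m := by
  have hmax := exists_le_mem_maxSet_univ hP.1
  set Mp := Set.Ici p ∩ maxSet Set.univ
  have hMp : Mp.Finite := (maxSet_univ_finite hP.1).subset Set.inter_subset_right
  have hmem : ∀ x, x ∈ Set.Ici p ∩ ⋂ m ∈ Mp, Set.Iic m ↔ p ≤ x ∧ ∀ m ∈ Mp, x ≤ m := by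
    simp only [Set.mem_inter_iff, Set.mem_Ici, Set.mem_iInter, Set.mem_Iic, implies_true]
  obtain ⟨m, hm, hpm⟩ := hmax p
  obtain ⟨q, hqC, hqmax⟩ := maxSet_inter_biInter_Iic_nonempty hP.2
    ⟨m, mem_maxSet_of_mem_maxSet_univ hpm hm⟩ hMp ⟨p, (hmem p).2 ⟨le_rfl, fun m hm => hm.1⟩⟩
  obtain ⟨hpq, hqM⟩ := (hmem q).1 hqC
  refine ⟨q, Or.inr ⟨fun hq => hp (hq.Ici_inter_of_le hmax (maxSet_univ_subset_Sseq k) hpq hqM),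
    fun b hb hqb => hqmax b ((hmem b).2 ⟨hpq.trans hqb, fun m hm => ?_⟩) hqb⟩, hpq, hqM⟩
  have hsub : Set.Ici b ∩ maxSet Set.univ ⊆ Mp :=
    Set.inter_subset_inter_left _ (Set.Ici_subset_Ici.2 (hpq.trans hqb))
  have hbM : Set.Ici b ∩ maxSet Set.univ = Mp :=
    Set.eq_of_subset_of_ncard_le hsub (by have := mt (ih b) hb; omega) hMp
  exact (hbM ▸ hm).1

theorem zigzagConnected_Ici_inter_Sseq (hP : AsnFin P) :
    ∀ (k : ℕ) (p : P), (Set.Ici p ∩ maxSet Set.univ).ncard ≤ k + 1 →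
      ZigzagConnected (Set.Ici p ∩ Sseq P k)
  | 0, p, hcard => by
    have hmax := exists_le_mem_maxSet_univ hP.1
    obtain ⟨m, hm, hpm⟩ := hmax p
    have hMp : (Set.Ici p ∩ maxSet Set.univ).Finite :=
      (maxSet_univ_finite hP.1).subset Set.inter_subset_right
    exact zigzagConnected_Ici_inter_of_mem_of_le hmax (maxSet_univ_subset_Sseq 0) hm hpm
      fun m' hm' => ((Set.ncard_le_one hMp).1 hcard m ⟨hpm, hm⟩ m' hm').le
  | k + 1, p, hcard => by
    have hmax := exists_le_mem_maxSet_univ hP.1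
    by_cases hp : ZigzagConnected (Set.Ici p ∩ Sseq P k)
    · exact hp.Ici_inter_mono hmax (maxSet_univ_subset_Sseq k) Set.subset_union_left
    · obtain ⟨q, hq, hpq, hqM⟩ := exists_mem_Sseq_succ_le_of_not_zigzagConnected hP
        (zigzagConnected_Ici_inter_Sseq hP k) hcard hp
      exact zigzagConnected_Ici_inter_of_mem_of_le hmax (maxSet_univ_subset_Sseq _) hq hpq hqM

theorem zigzagConnected_Ici_inter_iUnion_Sseq (hP : AsnFin P) (p : P) :
    ZigzagConnected (Set.Ici p ∩ ⋃ n, Sseq P n) := by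
  set k := (maxSet (Set.univ : Set P)).ncard
  have hcard : (Set.Ici p ∩ maxSet Set.univ).ncard ≤ k + 1 :=
    (Set.ncard_le_ncard Set.inter_subset_right (maxSet_univ_finite hP.1)).trans k.le_succ
  exact (zigzagConnected_Ici_inter_Sseq hP k p hcard).Ici_inter_mono
    (exists_le_mem_maxSet_univ hP.1) (maxSet_univ_subset_Sseq k) (Set.subset_iUnion _ k)

end Sseq

theorem Sinfty_embedding_final_general {P : Type} [PartialOrder P] (hP : AsnFin P) :
    (show Monotone (Subtype.val : {p : P // p ∈ ⋃ n, Sseq P n} → P) from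
        fun _ _ h => h).functor.Final ∧
      ∀ p : P, ZigzagConnected (Set.Ici p ∩ ⋃ n, Sseq P n) :=
  ⟨final_functor_of_zigzagConnected (zigzagConnected_Ici_inter_iUnion_Sseq hP),
    zigzagConnected_Ici_inter_iUnion_Sseq hP⟩

/-- Under the assumptions on `P`, with `S_∞ = ⋃ n, S_n`, the full embedding
`F : S_∞ ↪ P` is a final functor; that is, for every `p ∈ P` the subposet `↑p ∩ S_∞` is
nonempty and connected. -/
theorem Sinfty_embedding_final {P : Type} [PartialOrder P] [Nonempty P] (hP : AsnFin P) :
    (show Monotone (Subtype.val : {p : P // p ∈ ⋃ n, Sseq P n} → P) from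
        fun _ _ h => h).functor.Final ∧
      ∀ p : P, ZigzagConnected (Set.Ici p ∩ ⋃ n, Sseq P n) :=
  Sinfty_embedding_final_general hP
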